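/- arXiv:2603.10656 — 2 statements merged into one kernel-verified Lean document; each statement's English description precedes it below -/
import Mathlib

section
/- Let A = diag(A_1, …, A_p) be block diagonal with each A_i a Jordan miniblock with eigenvalue λ and eigenspace-generating first canonical vectors e_1^{(i)}, and let C = [C_1 … C_p] be partitioned conformably. Suppose each pair (A_i, C_i) is observable and the vectors {C_i e_1^{(i)}}_{i=1}^p are linearly independent. Then the pair (A, C) is observable. -/
open Matrix

/-- Complex Jordan miniblock: `l` on the diagonal, `1` on the superdiagonal. -/
def jordanBlockC (n : ℕ) (l : ℂ) : Matrix (Fin n) (Fin n) ℂ :=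
  fun i j => if i = j then l else if (i : ℕ) + 1 = (j : ℕ) then 1 else 0

lemma jordan_mulVec_apply (n : ℕ) (l : ℂ) (v : Fin n → ℂ) (i : Fin n) :
    (jordanBlockC n l).mulVec v i
      = l * v i + (if h : (i : ℕ) + 1 < n then v ⟨i + 1, h⟩ else 0) := by
  unfold jordanBlockC
  simp only [mulVec, dotProduct]
  have : ∀ j : Fin n, (if i = j then l else if (i:ℕ)+1 = (j:ℕ) then 1 else 0) * v j
      = (if i = j then l * v j else 0) + (if (i:ℕ)+1 = (j:ℕ) then v j else 0) := by
    intro j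
    by_cases h1 : i = j
    · subst h1
      have : ¬ ((i:ℕ)+1 = (i:ℕ)) := by omega
      simp [this]
    · by_cases h2 : (i:ℕ)+1 = (j:ℕ) <;> simp [h1, h2]
  simp_rw [this, Finset.sum_add_distrib, Finset.sum_ite_eq, Finset.mem_univ, if_true]
  congr 1
  by_cases h : (i:ℕ)+1 < n
  · rw [dif_pos h, Finset.sum_eq_single (⟨i+1, h⟩ : Fin n)]
    · simp
    · intro b _ hb
      rw [if_neg]
      intro hc; exact hb (Fin.ext hc.symm)
    · simp
  · rw [dif_neg h]
    apply Finset.sum_eq_zero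
    intro b _
    rw [if_neg]
    intro hc
    exact h (hc ▸ b.isLt)

lemma jordan_eig_eq {n : ℕ} {l μ : ℂ} {v : Fin n → ℂ}
    (h : (jordanBlockC n l).mulVec v = μ • v) (i : Fin n) :
    (if h : (i : ℕ) + 1 < n then v ⟨i + 1, h⟩ else 0) = (μ - l) * v i := by
  have := congrFun h i
  rw [jordan_mulVec_apply] at this
  simp only [Pi.smul_apply, smul_eq_mul] at this
  linear_combination this

lemma jordan_eig_zero_of_ne {n : ℕ} {l μ : ℂ} {v : Fin n → ℂ} (hμ : μ ≠ l)
    (h : (jordanBlockC n l).mulVec v = μ • v) : v = 0 := by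
  have key : ∀ k : ℕ, ∀ i : Fin n, n ≤ (i : ℕ) + k + 1 → v i = 0 := by
    intro k
    induction k with
    | zero =>
      intro i hi
      have hlt : ¬ ((i : ℕ) + 1 < n) := by omega
      have := jordan_eig_eq h i
      rw [dif_neg hlt] at this
      rcases mul_eq_zero.mp this.symm with h1 | h1
      · exact absurd (sub_eq_zero.mp h1) hμ
      · exact h1
    | succ k ih =>
      intro i hi
      by_cases hk : n ≤ (i : ℕ) + k + 1
      · exact ih i hk
      · have hlt : (i : ℕ) + 1 < n := by omega
        have := jordan_eig_eq h i
        rw [dif_pos hlt] at this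
        have hnext : v ⟨(i : ℕ) + 1, hlt⟩ = 0 := by
          apply ih
          simp; omega
        rw [hnext] at this
        rcases mul_eq_zero.mp this.symm with h1 | h1
        · exact absurd (sub_eq_zero.mp h1) hμ
        · exact h1
  funext i
  exact key n i (by omega)

lemma jordan_eig_support {n : ℕ} {l : ℂ} {v : Fin n → ℂ}
    (h : (jordanBlockC n l).mulVec v = l • v) :
    ∀ i : Fin n, (i : ℕ) ≠ 0 → v i = 0 := by
  intro i hi
  obtain ⟨m, hm⟩ : ∃ m, (i : ℕ) = m + 1 := ⟨(i:ℕ) - 1, by omega⟩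
  have hlt : m + 1 < n := hm ▸ i.isLt
  have hmlt : m < n := by omega
  have := jordan_eig_eq h ⟨m, hmlt⟩
  simp only [sub_self, zero_mul] at this
  rw [dif_pos (show (m:ℕ)+1 < n from hlt)] at this
  have : v ⟨m + 1, hlt⟩ = 0 := this
  convert this using 2
  exact Fin.ext hm

lemma blockDiag_mulVec {p : ℕ} {d : Fin p → ℕ}
    (M : ∀ i, Matrix (Fin (d i)) (Fin (d i)) ℂ) (v : ((i : Fin p) × Fin (d i)) → ℂ)
    (i : Fin p) (x : Fin (d i)) :
    (blockDiagonal' M).mulVec v ⟨i, x⟩ = (M i).mulVec (fun y => v ⟨i, y⟩) x := by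
  rw [mulVec, mulVec, dotProduct, dotProduct, ← Finset.univ_sigma_univ, Finset.sum_sigma]
  rw [Finset.sum_eq_single i]
  · congr 1; funext y; rw [blockDiagonal'_apply_eq]
  · intro b _ hb
    apply Finset.sum_eq_zero
    intro y _
    rw [blockDiagonal'_apply_ne _ _ _ (fun h => hb h.symm), zero_mul]
  · simp

/-- If `A = diag(A₁,…,Aₚ)` with each `Aᵢ` a Jordan miniblock for the same `λ`,
each pair `(Aᵢ, Cᵢ)` is observable, and the vectors `Cᵢ e₁⁽ⁱ⁾` are linearly
independent, then the pair `(A, C)` is observable. -/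
theorem observable_blockDiagonal (p q : ℕ) (d : Fin p → ℕ) (hd : ∀ i, 0 < d i) (l : ℂ)
    (C : Matrix (Fin q) ((i : Fin p) × Fin (d i)) ℂ)
    (hobs : ∀ i : Fin p, ∀ (μ : ℂ) (v : Fin (d i) → ℂ),
      (jordanBlockC (d i) l).mulVec v = μ • v →
      (fun j : Fin q => ∑ x : Fin (d i), C j ⟨i, x⟩ * v x) = (0 : Fin q → ℂ) → v = 0)
    (hind : LinearIndependent ℂ
      (fun i : Fin p => (fun j : Fin q => C j ⟨i, ⟨0, hd i⟩⟩))) :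
    ∀ (μ : ℂ) (v : ((i : Fin p) × Fin (d i)) → ℂ),
      (Matrix.blockDiagonal' (fun i => jordanBlockC (d i) l)).mulVec v = μ • v →
      C.mulVec v = 0 → v = 0 := by
  intro μ v hAv hCv
  have hblk : ∀ i : Fin p,
      (jordanBlockC (d i) l).mulVec (fun y => v ⟨i, y⟩) = μ • (fun y => v ⟨i, y⟩) := by
    intro i
    funext x
    have := congrFun hAv ⟨i, x⟩
    rw [blockDiag_mulVec] at this
    exact this
  by_cases hμ : μ = l
  · subst hμ
    have hsupp : ∀ i : Fin p, ∀ x : Fin (d i), (x : ℕ) ≠ 0 → v ⟨i, x⟩ = 0 := by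
      intro i x hx
      exact jordan_eig_support (hblk i) x hx
    have hsum : ∀ j : Fin q, ∑ i : Fin p, v ⟨i, ⟨0, hd i⟩⟩ * C j ⟨i, ⟨0, hd i⟩⟩ = 0 := by
      intro j
      have := congrFun hCv j
      rw [mulVec, dotProduct, ← Finset.univ_sigma_univ, Finset.sum_sigma] at this
      simp only [Pi.zero_apply] at this
      rw [← this]
      apply Finset.sum_congr rfl
      intro i _
      rw [Finset.sum_eq_single (⟨0, hd i⟩ : Fin (d i))]
      · ring
      · intro b _ hb
        rw [hsupp i b (fun h => hb (Fin.ext h)), mul_zero]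
      · simp
    have hzero : ∀ i : Fin p, v ⟨i, ⟨0, hd i⟩⟩ = 0 := by
      have := Fintype.linearIndependent_iff.mp hind (fun i => v ⟨i, ⟨0, hd i⟩⟩) ?_
      · exact this
      · funext j
        simpa [Finset.sum_apply] using hsum j
    funext ⟨i, x⟩
    by_cases hx : (x : ℕ) = 0
    · have : x = ⟨0, hd i⟩ := Fin.ext hx
      rw [this]; exact hzero i
    · exact hsupp i x hx
  · funext ⟨i, x⟩
    have := jordan_eig_zero_of_ne hμ (hblk i)
    exact congrFun this x
end

section
/- Consider the coupled error recursion e_i(t+1) = (1 − k ℒ[i,i]) A e_i(t) − k A ∑_{j≠i} ℒ[i,j] e_j(t) for i in an index set V', where A is an n×n Jordan miniblock with eigenvalue λ, |λ| ≥ 1, and ℒ' = (ℒ[i,j])_{i,j ∈ V'}. Then the stacked vector e(t) = col(e_i(t))_{i∈V'} satisfies e(t+1) = ((I − k ℒ') ⊗ A) e(t), and e(t) → 0 for all initial conditions if and only if |1 − kμ| < 1/|λ| for every eigenvalue μ of ℒ'. -/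
open Matrix Kronecker

/-- `μ` is an eigenvalue of the square matrix `M`. -/
def IsEigenvalue {n : Type*} [Fintype n] (M : Matrix n n ℂ) (μ : ℂ) : Prop :=
  ∃ v : n → ℂ, v ≠ 0 ∧ M.mulVec v = μ • v

/-- Real Jordan miniblock: `l` on the diagonal, `1` on the superdiagonal. -/
def jordanBlock (n : ℕ) (l : ℝ) : Matrix (Fin n) (Fin n) ℝ :=
  fun i j => if i = j then l else if (i : ℕ) + 1 = (j : ℕ) then 1 else 0

/-! ### Auxiliary lemmas -/

lemma jordanBlock_decomp (d : ℕ) (l : ℝ) :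
    jordanBlock d l = l • (1 : Matrix (Fin d) (Fin d) ℝ) + jordanBlock d 0 := by
  ext i j
  by_cases h : i = j <;> simp [jordanBlock, h, Matrix.one_apply]

lemma jordanBlock_zero_pow_entry (d : ℕ) :
    ∀ (m : ℕ) (i j : Fin d), (j : ℕ) < (i : ℕ) + m → ((jordanBlock d 0) ^ m) i j = 0 := by
  intro m
  induction m with
  | zero =>
    intro i j h
    have : i ≠ j := fun he => by subst he; omega
    simp [Matrix.one_apply, this]
  | succ m ih =>
    intro i j h
    rw [pow_succ, Matrix.mul_apply]
    apply Finset.sum_eq_zero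
    intro c _
    by_cases hc : (c : ℕ) < (i : ℕ) + m
    · rw [ih i c hc, zero_mul]
    · have hcj : jordanBlock d 0 c j = 0 := by
        by_cases hcj : c = j
        · subst hcj; simp [jordanBlock]
        · have : ¬ ((c : ℕ) + 1 = (j : ℕ)) := by omega
          simp [jordanBlock, hcj, this]
      rw [hcj, mul_zero]

lemma jordanBlock_zero_pow (d : ℕ) : (jordanBlock d 0) ^ d = 0 := by
  ext i j
  exact jordanBlock_zero_pow_entry d d i j (by omega)

lemma sub_kronecker' {R l m n p : Type*} [Ring R] (A B : Matrix l m R) (C : Matrix n p R) :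
    (A - B) ⊗ₖ C = A ⊗ₖ C - B ⊗ₖ C := by
  ext ⟨i, a⟩ ⟨j, b⟩
  simp [Matrix.kroneckerMap_apply, sub_mul]

lemma kronecker_pow {R m n : Type*} [CommSemiring R] [Fintype m] [Fintype n]
    [DecidableEq m] [DecidableEq n] (A : Matrix m m R) (B : Matrix n n R) (t : ℕ) :
    (A ⊗ₖ B) ^ t = (A ^ t) ⊗ₖ (B ^ t) := by
  induction t with
  | zero => simp [Matrix.one_kronecker_one]
  | succ t ih => rw [pow_succ, pow_succ, pow_succ, ih, Matrix.mul_kronecker_mul]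

lemma isEigenvalue_iff_mem_spectrum {n : Type*} [Fintype n] [DecidableEq n]
    (M : Matrix n n ℂ) (μ : ℂ) : IsEigenvalue M μ ↔ μ ∈ spectrum ℂ M := by
  rw [spectrum.mem_iff, Algebra.algebraMap_eq_smul_one, Matrix.isUnit_iff_isUnit_det,
    isUnit_iff_ne_zero, not_not]
  rw [← Matrix.exists_mulVec_eq_zero_iff]
  constructor
  · rintro ⟨v, hv, heq⟩
    refine ⟨v, hv, ?_⟩
    rw [Matrix.sub_mulVec, Matrix.smul_mulVec, Matrix.one_mulVec, heq, sub_self]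
  · rintro ⟨v, hv, heq⟩
    refine ⟨v, hv, ?_⟩
    rw [Matrix.sub_mulVec, Matrix.smul_mulVec, Matrix.one_mulVec, sub_eq_zero] at heq
    exact heq.symm

lemma isUnit_smul_matrix {n : Type*} [Fintype n] [DecidableEq n] (l : ℂ) (hl : l ≠ 0)
    (C : Matrix n n ℂ) (h : IsUnit C) : IsUnit (l • C) := by
  have h1 : l • C = (l • (1 : Matrix n n ℂ)) * C := by rw [Matrix.smul_mul, Matrix.one_mul]
  rw [h1]
  exact ((Matrix.isUnit_iff_isUnit_det _).2 (by simp [Matrix.det_smul, hl])).mul h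

lemma map_matrix_pow {n : Type*} [Fintype n] [DecidableEq n] (B : Matrix n n ℝ) (t : ℕ) :
    (B.map (fun r : ℝ => (r : ℂ))) ^ t = (B ^ t).map (fun r : ℝ => (r : ℂ)) := by
  have h := map_pow (Complex.ofRealHom.mapMatrix) B t
  simp only [RingHom.mapMatrix_apply] at h
  exact h.symm

lemma spec_phi_subset {m : Type*} [Fintype m] [DecidableEq m] {d : ℕ}
    (M : Matrix m m ℂ) (l : ℝ) (hl : l ≠ 0) (x : ℂ)
    (hx : x ∈ spectrum ℂ (M ⊗ₖ ((jordanBlock d l).map (fun r : ℝ => (r : ℂ))))) :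
    ∃ y ∈ spectrum ℂ M, x = (l : ℂ) * y := by
  have hlc : (l : ℂ) ≠ 0 := Complex.ofReal_ne_zero.mpr hl
  set A : Matrix (Fin d) (Fin d) ℂ := (jordanBlock d l).map (fun r : ℝ => (r : ℂ)) with hA
  set Nc : Matrix (Fin d) (Fin d) ℂ := (jordanBlock d 0).map (fun r : ℝ => (r : ℂ)) with hNc
  have hAdec : A = (l : ℂ) • (1 : Matrix (Fin d) (Fin d) ℂ) + Nc := by
    ext i j
    by_cases h : i = j
    · subst h; simp [hA, hNc, jordanBlock, Matrix.one_apply]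
    · by_cases h2 : (i : ℕ) + 1 = (j : ℕ) <;>
        simp [hA, hNc, jordanBlock, Matrix.one_apply, h, h2]
  set B : Matrix (m × Fin d) (m × Fin d) ℂ := M ⊗ₖ (1 : Matrix (Fin d) (Fin d) ℂ) with hB
  set Q : Matrix (m × Fin d) (m × Fin d) ℂ := M ⊗ₖ Nc with hQ
  have hPhi : M ⊗ₖ A = (l : ℂ) • B + Q := by
    rw [hAdec, Matrix.kronecker_add, Matrix.kronecker_smul]
  have hQnil : IsNilpotent Q := by
    refine ⟨d, ?_⟩
    rw [hQ, kronecker_pow, hNc, map_matrix_pow, jordanBlock_zero_pow, Matrix.map_zero,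
      Matrix.kronecker_zero]
    exact Complex.ofReal_zero
  have hQB : Commute Q B := by
    rw [hQ, hB]
    unfold Commute SemiconjBy
    rw [← Matrix.mul_kronecker_mul, ← Matrix.mul_kronecker_mul, Matrix.one_mul, Matrix.mul_one]
  have hx1 : x ∈ spectrum ℂ ((l : ℂ) • B) := by
    rw [spectrum.mem_iff] at hx ⊢
    intro hU
    apply hx
    rw [hPhi]
    have hdiff : algebraMap ℂ _ x - ((l : ℂ) • B + Q) =
        (algebraMap ℂ _ x - (l : ℂ) • B) - Q := by abel
    rw [hdiff]
    have hcomm : Commute (-Q) (algebraMap ℂ _ x - (l : ℂ) • B) := by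
      apply Commute.neg_left
      exact Commute.sub_right (Algebra.commute_algebraMap_right x Q) (hQB.smul_right _)
    have := (hQnil.neg).isUnit_add_right_of_commute hU hcomm
    simpa [sub_eq_add_neg, add_comm] using this
  have hx2 : x / l ∈ spectrum ℂ B := by
    rw [spectrum.mem_iff] at hx1 ⊢
    intro hU
    apply hx1
    rw [Algebra.algebraMap_eq_smul_one] at hU ⊢
    have h1 : x • (1 : Matrix (m × Fin d) (m × Fin d) ℂ) - (l : ℂ) • B =
        (l : ℂ) • ((x / l) • 1 - B) := by
      rw [smul_sub, smul_smul, mul_div_cancel₀ _ hlc]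
    rw [h1]
    exact isUnit_smul_matrix _ hlc _ hU
  refine ⟨x / l, ?_, by field_simp⟩
  rw [spectrum.mem_iff] at hx2 ⊢
  intro hU
  apply hx2
  rw [Algebra.algebraMap_eq_smul_one] at hU ⊢
  have h1 : (x / l) • (1 : Matrix (m × Fin d) (m × Fin d) ℂ) - B =
      ((x / l) • 1 - M) ⊗ₖ (1 : Matrix (Fin d) (Fin d) ℂ) := by
    rw [sub_kronecker', Matrix.smul_kronecker, Matrix.one_kronecker_one]
  rw [h1, Matrix.isUnit_iff_isUnit_det, Matrix.det_kronecker, isUnit_iff_ne_zero]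
  rw [Matrix.isUnit_iff_isUnit_det, isUnit_iff_ne_zero] at hU
  simp [hU, pow_ne_zero]

lemma spec_one_sub_smul {n : Type*} [Fintype n] [DecidableEq n] (L : Matrix n n ℂ) (k : ℂ)
    (hk : k ≠ 0) (y : ℂ) (hy : y ∈ spectrum ℂ ((1 : Matrix n n ℂ) - k • L)) :
    ∃ μ ∈ spectrum ℂ L, y = 1 - k * μ := by
  refine ⟨(1 - y) / k, ?_, by field_simp; ring⟩
  rw [spectrum.mem_iff] at hy ⊢
  intro hU
  apply hy
  rw [Algebra.algebraMap_eq_smul_one] at hU ⊢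
  have h1 : y • (1 : Matrix n n ℂ) - ((1 : Matrix n n ℂ) - k • L) =
      (-k) • (((1 - y) / k) • (1 : Matrix n n ℂ) - L) := by
    rw [smul_sub, smul_smul, neg_mul, mul_div_cancel₀ _ hk]
    module
  rw [h1]
  exact isUnit_smul_matrix _ (neg_ne_zero.mpr hk) _ hU

section NormedSection

attribute [local instance] Matrix.linftyOpNormedRing Matrix.linftyOpNormedAlgebra

lemma entry_le_norm {n : Type*} [Fintype n] [DecidableEq n] (M : Matrix n n ℂ) (i j : n) :
    ‖M i j‖₊ ≤ ‖M‖₊ := by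
  rw [Matrix.linfty_opNNNorm_def]
  calc ‖M i j‖₊ ≤ ∑ j', ‖M i j'‖₊ :=
        Finset.single_le_sum (f := fun j' => ‖M i j'‖₊) (fun _ _ => zero_le)
          (Finset.mem_univ j)
    _ ≤ _ := Finset.le_sup (f := fun i => ∑ j', ‖M i j'‖₊) (Finset.mem_univ i)

lemma pow_decay {n : Type*} [Fintype n] [DecidableEq n] [Nonempty n]
    (Φ : Matrix n n ℂ) (h : ∀ z ∈ spectrum ℂ Φ, ‖z‖₊ < 1) :
    ∀ ε : ℝ, 0 < ε → ∀ᶠ t in Filter.atTop, ∀ i j, ‖(Φ ^ t) i j‖ < ε := by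
  have hρ : spectralRadius ℂ Φ < 1 := by
    simpa using spectrum.spectralRadius_lt_of_forall_lt Φ (r := 1) h
  obtain ⟨r, hr1, hr2⟩ := ENNReal.lt_iff_exists_nnreal_btwn.mp hρ
  have hr2' : r < 1 := by exact_mod_cast hr2
  have hgel := spectrum.pow_nnnorm_pow_one_div_tendsto_nhds_spectralRadius Φ
  have hev : ∀ᶠ t : ℕ in Filter.atTop, (‖Φ ^ t‖₊ : ENNReal) ^ (1 / (t : ℝ)) < (r : ENNReal) :=
    hgel.eventually_lt_const hr1
  have hbound : ∀ᶠ t : ℕ in Filter.atTop, ‖Φ ^ t‖₊ ≤ r ^ t := by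
    filter_upwards [hev, Filter.eventually_ge_atTop 1] with t ht ht1
    have htne : (t : ℝ) ≠ 0 := by positivity
    have h2 : ((‖Φ ^ t‖₊ : ENNReal) ^ (1 / (t : ℝ))) ^ (t : ℝ) ≤ (r : ENNReal) ^ (t : ℝ) :=
      ENNReal.rpow_le_rpow ht.le (by positivity)
    have h3 : ((‖Φ ^ t‖₊ : ENNReal) ^ (1 / (t : ℝ))) ^ (t : ℝ) = (‖Φ ^ t‖₊ : ENNReal) := by
      rw [← ENNReal.rpow_mul, one_div, inv_mul_cancel₀ htne, ENNReal.rpow_one]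
    rw [h3, ENNReal.rpow_natCast, ← ENNReal.coe_pow] at h2
    exact_mod_cast h2
  intro ε hε
  have hrt : Filter.Tendsto (fun t : ℕ => (r : ℝ) ^ t) Filter.atTop (nhds 0) :=
    tendsto_pow_atTop_nhds_zero_of_lt_one r.coe_nonneg (by exact_mod_cast hr2')
  have hrt2 : ∀ᶠ t : ℕ in Filter.atTop, (r : ℝ) ^ t < ε :=
    (hrt.eventually_lt_const hε)
  filter_upwards [hbound, hrt2] with t h1 h2 i j
  calc ‖(Φ ^ t) i j‖ = ‖(Φ ^ t) i j‖ := rfl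
    _ ≤ ‖Φ ^ t‖ := entry_le_norm _ i j
    _ ≤ (r : ℝ) ^ t := by exact_mod_cast h1
    _ < ε := h2

lemma matrix_spectrum_nonempty {n : Type*} [Fintype n] [DecidableEq n] [Nonempty n]
    (A : Matrix n n ℂ) : (spectrum ℂ A).Nonempty :=
  spectrum.nonempty_of_isAlgClosed_of_finiteDimensional ℂ A

end NormedSection

/-- The coupled error recursion
`eᵢ(t+1) = (1 − k ℒ[i,i]) A eᵢ(t) − k A ∑_{j≠i} ℒ[i,j] eⱼ(t)`, for `i` in `V'`,
stacks into `e(t+1) = ((I − k ℒ') ⊗ A) e(t)`, and every solution converges to `0`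
iff `|1 − kμ| < 1/|λ|` for every eigenvalue `μ` of the principal submatrix `ℒ'`. -/
theorem coupled_error_recursion (N d : ℕ) (hd : 0 < d) (l k : ℝ) (hl : 1 ≤ |l|)
    (L : Matrix (Fin N) (Fin N) ℝ) (V : Finset (Fin N))
    (L' : Matrix {i : Fin N // i ∈ V} {i : Fin N // i ∈ V} ℝ)
    (hL' : L' = L.submatrix (fun i : {i : Fin N // i ∈ V} => i.1) (fun i => i.1)) :
    (∀ e : ℕ → ({i : Fin N // i ∈ V} × Fin d) → ℝ,
      (∀ (t : ℕ) (i : {i : Fin N // i ∈ V}) (a : Fin d),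
        e (t + 1) (i, a) =
          (1 - k * L i.1 i.1) * ((jordanBlock d l).mulVec (fun b => e t (i, b))) a
          - k * ((jordanBlock d l).mulVec
              (fun b => ∑ j : {i : Fin N // i ∈ V},
                if j = i then 0 else L i.1 j.1 * e t (j, b))) a) →
      ∀ t : ℕ, e (t + 1) =
        (((1 : Matrix {i : Fin N // i ∈ V} {i : Fin N // i ∈ V} ℝ) - k • L')
          ⊗ₖ jordanBlock d l).mulVec (e t)) ∧
    ((∀ e : ℕ → ({i : Fin N // i ∈ V} × Fin d) → ℝ,
        (∀ t : ℕ, e (t + 1) =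
          (((1 : Matrix {i : Fin N // i ∈ V} {i : Fin N // i ∈ V} ℝ) - k • L')
            ⊗ₖ jordanBlock d l).mulVec (e t)) →
        Filter.Tendsto e Filter.atTop (nhds 0)) ↔
      ∀ μ : ℂ, IsEigenvalue (L'.map (fun x : ℝ => (x : ℂ))) μ →
        ‖1 - (k : ℂ) * μ‖ < 1 / |l|) := by
  subst hL'
  constructor
  · -- Part 1: stacking
    intro e he t
    funext p
    obtain ⟨i, a⟩ := p
    rw [he t i a]
    have key : ∀ b : Fin d,
        (∑ j : {i : Fin N // i ∈ V}, if j = i then 0 else L i.1 j.1 * e t (j, b)) =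
        (∑ j : {i : Fin N // i ∈ V}, L i.1 j.1 * e t (j, b)) - L i.1 i.1 * e t (i, b) := by
      intro b
      have h1 : ∀ j : {i : Fin N // i ∈ V},
          (if j = i then 0 else L i.1 j.1 * e t (j, b)) =
          L i.1 j.1 * e t (j, b) - (if j = i then L i.1 j.1 * e t (j, b) else 0) := by
        intro j
        by_cases h : j = i
        · subst h; simp
        · simp [h]
      rw [Finset.sum_congr rfl (fun j _ => h1 j), Finset.sum_sub_distrib,
        Finset.sum_ite_eq' Finset.univ i (fun j => L i.1 j.1 * e t (j, b))]
      simp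
    show _ = ∑ q : {i : Fin N // i ∈ V} × Fin d, _ * e t q
    rw [Fintype.sum_prod_type]
    simp only [Matrix.kroneckerMap_apply, Matrix.sub_apply, Matrix.one_apply, Matrix.smul_apply,
      Matrix.submatrix_apply, smul_eq_mul, Matrix.mulVec, dotProduct, key]
    simp only [sub_mul, mul_sub, Finset.sum_sub_distrib, Finset.mul_sum, ite_mul, one_mul,
      zero_mul]
    simp only [Finset.sum_ite_irrel, Finset.sum_const_zero]
    rw [Finset.sum_ite_eq Finset.univ i (fun j => ∑ b, jordanBlock d l a b * e t (j, b))]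
    simp only [Finset.mem_univ, if_true]
    ring_nf
    rw [Finset.sum_comm]
    ring_nf
  · -- Part 2
    have hlpos : (0 : ℝ) < |l| := lt_of_lt_of_le one_pos hl
    have hlne : l ≠ 0 := fun h => by rw [h] at hlpos; simp at hlpos
    set M : Matrix {i : Fin N // i ∈ V} {i : Fin N // i ∈ V} ℝ :=
      (1 : Matrix {i : Fin N // i ∈ V} {i : Fin N // i ∈ V} ℝ) -
        k • (L.submatrix (fun i : {i : Fin N // i ∈ V} => i.1) (fun i => i.1)) with hM
    set Φ : Matrix ({i : Fin N // i ∈ V} × Fin d) ({i : Fin N // i ∈ V} × Fin d) ℝ :=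
      M ⊗ₖ jordanBlock d l with hΦ
    constructor
    · -- convergence → eigenvalue bound
      intro hconv μ hμ
      obtain ⟨v, hv0, hveq⟩ := hμ
      obtain ⟨i0, hi0⟩ := Function.ne_iff.mp hv0
      set z : ({i : Fin N // i ∈ V} × Fin d) → ℂ :=
        fun p => if p.2 = ⟨0, hd⟩ then v p.1 else 0 with hz
      set c : ℂ := (1 - (k : ℂ) * μ) * ((l : ℝ) : ℂ) with hc
      have hA0 : ∀ a : Fin d, jordanBlock d l a ⟨0, hd⟩ = if a = ⟨0, hd⟩ then l else 0 := by
        intro a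
        by_cases h : a = ⟨0, hd⟩
        · simp [jordanBlock, h]
        · have h2 : ¬ ((a : ℕ) + 1 = ((⟨0, hd⟩ : Fin d) : ℕ)) := by simp
          simp [jordanBlock, h, h2]
      have hLrow : ∀ i : {i : Fin N // i ∈ V},
          (∑ j : {i : Fin N // i ∈ V}, ((L i.1 j.1 : ℝ) : ℂ) * v j) = μ * v i := by
        intro i
        have h1 := congrFun hveq i
        simpa [Matrix.mulVec, dotProduct, Matrix.map_apply, Matrix.submatrix_apply] using h1
      have hzeig : (Φ.map (fun r : ℝ => (r : ℂ))).mulVec z = c • z := by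
        funext p
        obtain ⟨i, a⟩ := p
        show (∑ q : {i : Fin N // i ∈ V} × Fin d, ((Φ (i, a) q : ℝ) : ℂ) * z q) = c * z (i, a)
        rw [Fintype.sum_prod_type]
        have hinner : ∀ j, (∑ b : Fin d, ((Φ (i, a) (j, b) : ℝ) : ℂ) * z (j, b))
            = ((Φ (i, a) (j, ⟨0, hd⟩) : ℝ) : ℂ) * v j := by
          intro j
          have h1 : ∀ b : Fin d, ((Φ (i, a) (j, b) : ℝ) : ℂ) * z (j, b)
              = if b = ⟨0, hd⟩ then ((Φ (i, a) (j, b) : ℝ) : ℂ) * v j else 0 := by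
            intro b
            by_cases hb : b = ⟨0, hd⟩ <;> simp [hz, hb]
          rw [Finset.sum_congr rfl (fun b _ => h1 b),
            Finset.sum_ite_eq' Finset.univ (⟨0, hd⟩ : Fin d)
              (fun b => ((Φ (i, a) (j, b) : ℝ) : ℂ) * v j)]
          simp
        simp only [hinner]
        have hΦentry : ∀ j, Φ (i, a) (j, ⟨0, hd⟩)
            = M i j * (if a = ⟨0, hd⟩ then l else 0) := by
          intro j
          rw [hΦ, Matrix.kroneckerMap_apply, hA0]
        by_cases ha : a = ⟨0, hd⟩
        · have hzi : z (i, a) = v i := by simp [hz, ha]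
          rw [hzi]
          have hexp : ∀ j, ((Φ (i, a) (j, ⟨0, hd⟩) : ℝ) : ℂ) * v j
              = (l : ℂ) * ((if i = j then (1 : ℂ) else 0) * v j
                  - (k : ℂ) * (((L i.1 j.1 : ℝ) : ℂ) * v j)) := by
            intro j
            rw [hΦentry j, if_pos ha, hM]
            by_cases hij : i = j
            · subst hij
              simp only [Matrix.sub_apply, Matrix.one_apply_eq, Matrix.smul_apply,
                Matrix.submatrix_apply, smul_eq_mul, if_pos rfl]
              push_cast
              ring
            · simp only [Matrix.sub_apply, Matrix.one_apply_ne hij, Matrix.smul_apply,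
                Matrix.submatrix_apply, smul_eq_mul, if_neg hij]
              push_cast
              ring
          rw [Finset.sum_congr rfl (fun j _ => hexp j), ← Finset.mul_sum,
            Finset.sum_sub_distrib]
          simp only [ite_mul, one_mul, zero_mul]
          rw [Finset.sum_ite_eq Finset.univ i (fun j => v j)]
          simp only [Finset.mem_univ, if_true]
          rw [← Finset.mul_sum, hLrow i, hc]
          ring
        · have hzi : z (i, a) = 0 := by simp [hz, ha]
          rw [hzi, mul_zero]
          apply Finset.sum_eq_zero
          intro j _
          rw [hΦentry j, if_neg ha, mul_zero]
          simp
      set x : ({i : Fin N // i ∈ V} × Fin d) → ℝ := fun p => (z p).re with hx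
      set y : ({i : Fin N // i ∈ V} × Fin d) → ℝ := fun p => (z p).im with hy
      have hmapmul : ∀ (B : Matrix ({i : Fin N // i ∈ V} × Fin d)
            ({i : Fin N // i ∈ V} × Fin d) ℝ) p,
          (B.map (fun r : ℝ => (r : ℂ))).mulVec z p
            = ((B.mulVec x p : ℝ) : ℂ) + ((B.mulVec y p : ℝ) : ℂ) * Complex.I := by
        intro B p
        show (∑ q, ((B p q : ℝ) : ℂ) * z q) = _
        simp only [Matrix.mulVec, dotProduct]
        push_cast
        rw [Finset.sum_mul, ← Finset.sum_add_distrib]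
        apply Finset.sum_congr rfl
        intro q _
        rw [← Complex.re_add_im (z q)]
        push_cast
        ring
      set e1 : ℕ → ({i : Fin N // i ∈ V} × Fin d) → ℝ := fun t => (Φ ^ t).mulVec x with he1
      set e2 : ℕ → ({i : Fin N // i ∈ V} × Fin d) → ℝ := fun t => (Φ ^ t).mulVec y with he2
      have hrec : ∀ (w : ({i : Fin N // i ∈ V} × Fin d) → ℝ) (t : ℕ),
          (Φ ^ (t + 1)).mulVec w = Φ.mulVec ((Φ ^ t).mulVec w) := by
        intro w t
        rw [Matrix.mulVec_mulVec, ← pow_succ']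
      have ht1 : Filter.Tendsto e1 Filter.atTop (nhds 0) := hconv e1 (fun t => hrec x t)
      have ht2 : Filter.Tendsto e2 Filter.atTop (nhds 0) := hconv e2 (fun t => hrec y t)
      have hmp : ∀ t : ℕ, (Φ.map (fun r : ℝ => (r : ℂ))) ^ t
          = (Φ ^ t).map (fun r : ℝ => (r : ℂ)) := map_matrix_pow Φ
      have hpow : ∀ t : ℕ, ((Φ ^ t).map (fun r : ℝ => (r : ℂ))).mulVec z = (c ^ t) • z := by
        intro t
        induction t with
        | zero => simp
        | succ t ih =>
          rw [← hmp] at ih ⊢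
          rw [pow_succ', ← Matrix.mulVec_mulVec, ih, Matrix.mulVec_smul, hzeig, smul_smul,
            ← pow_succ]
      have hcz : ∀ t : ℕ, c ^ t * v i0
          = ((e1 t (i0, ⟨0, hd⟩) : ℝ) : ℂ) + ((e2 t (i0, ⟨0, hd⟩) : ℝ) : ℂ) * Complex.I := by
        intro t
        have h1 := congrFun (hpow t) (i0, ⟨0, hd⟩)
        rw [hmapmul (Φ ^ t) (i0, ⟨0, hd⟩)] at h1
        have h2 : (c ^ t • z) (i0, ⟨0, hd⟩) = c ^ t * v i0 := by simp [hz]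
        rw [h2] at h1
        exact h1.symm
      have habs : ∀ t : ℕ, ‖c ^ t * v i0‖
          ≤ |e1 t (i0, ⟨0, hd⟩)| + |e2 t (i0, ⟨0, hd⟩)| := by
        intro t
        rw [hcz t]
        refine le_trans (Complex.norm_le_abs_re_add_abs_im _) ?_
        simp
      have htend : Filter.Tendsto (fun t => ‖c ^ t * v i0‖)
          Filter.atTop (nhds 0) := by
        have h1 : Filter.Tendsto (fun t => |e1 t (i0, ⟨0, hd⟩)| + |e2 t (i0, ⟨0, hd⟩)|)
            Filter.atTop (nhds 0) := by
          have h2 := ((tendsto_pi_nhds.mp ht1 (i0, ⟨0, hd⟩)).abs).add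
            ((tendsto_pi_nhds.mp ht2 (i0, ⟨0, hd⟩)).abs)
          simpa using h2
        exact squeeze_zero (fun t => norm_nonneg _) habs h1
      have hc1 : ‖c‖ < 1 := by
        by_contra hcon
        push_neg at hcon
        have hvpos : 0 < ‖v i0‖ := by
          simpa using (norm_pos_iff.mpr hi0)
        obtain ⟨t, ht⟩ := (htend.eventually_lt_const hvpos).exists
        have h3 : ‖v i0‖ ≤ ‖c ^ t * v i0‖ := by
          rw [norm_mul, norm_pow]
          have h4 : 1 ≤ ‖c‖ ^ t := one_le_pow₀ hcon
          nlinarith [norm_nonneg (v i0)]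
        linarith
      rw [lt_div_iff₀ hlpos]
      calc ‖1 - (k : ℂ) * μ‖ * |l|
          = ‖c‖ := by rw [hc, norm_mul, Complex.norm_real, Real.norm_eq_abs]
        _ < 1 := hc1
    · -- eigenvalue bound → convergence
      intro hbnd e he
      by_cases hne : Nonempty {i : Fin N // i ∈ V}
      · have hfd : Nonempty (Fin d) := ⟨⟨0, hd⟩⟩
        set Lc : Matrix {i : Fin N // i ∈ V} {i : Fin N // i ∈ V} ℂ :=
          (L.submatrix (fun i : {i : Fin N // i ∈ V} => i.1) (fun i => i.1)).map
            (fun r : ℝ => (r : ℂ)) with hLc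
        have hbnd' : ∀ μ ∈ spectrum ℂ Lc, ‖1 - (k : ℂ) * μ‖ < 1 / |l| := by
          intro μ hμ
          exact hbnd μ ((isEigenvalue_iff_mem_spectrum Lc μ).mpr hμ)
        have hk : (k : ℂ) ≠ 0 := by
          obtain ⟨μ0, hμ0⟩ := matrix_spectrum_nonempty Lc
          intro hk0
          have h1 := hbnd' μ0 hμ0
          rw [hk0] at h1
          have h1' : (1 : ℝ) < 1 / |l| := by simpa using h1
          have h2 : 1 / |l| ≤ 1 := by
            rw [div_le_one hlpos]; exact hl
          linarith
        have hMc : M.map (fun r : ℝ => (r : ℂ))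
            = (1 : Matrix {i : Fin N // i ∈ V} {i : Fin N // i ∈ V} ℂ) - (k : ℂ) • Lc := by
          ext i j
          by_cases hij : i = j <;>
            simp [hM, hLc, Matrix.one_apply, Matrix.map_apply, Matrix.sub_apply,
              Matrix.smul_apply, Matrix.submatrix_apply, hij]
        have hΦc : Φ.map (fun r : ℝ => (r : ℂ))
            = (M.map (fun r : ℝ => (r : ℂ))) ⊗ₖ
                ((jordanBlock d l).map (fun r : ℝ => (r : ℂ))) := by
          ext ⟨i, a⟩ ⟨j, b⟩
          simp [hΦ, Matrix.kroneckerMap_apply, Matrix.map_apply]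
        have hspec : ∀ w ∈ spectrum ℂ (Φ.map (fun r : ℝ => (r : ℂ))), ‖w‖₊ < 1 := by
          intro w hw
          rw [hΦc] at hw
          obtain ⟨w1, hw1, rfl⟩ := spec_phi_subset _ l hlne w hw
          rw [hMc] at hw1
          obtain ⟨μ, hμ, rfl⟩ := spec_one_sub_smul Lc (k : ℂ) hk w1 hw1
          have h1 := hbnd' μ hμ
          have h2 : ‖(l : ℂ) * (1 - (k : ℂ) * μ)‖ < 1 := by
            rw [norm_mul, Complex.norm_real, Real.norm_eq_abs]
            calc |l| * ‖1 - (k : ℂ) * μ‖ < |l| * (1 / |l|) := by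
                  exact mul_lt_mul_of_pos_left h1 hlpos
              _ = 1 := by field_simp
          exact h2
        have hdecay := pow_decay (Φ.map (fun r : ℝ => (r : ℂ))) hspec
        have hentry : ∀ p q, Filter.Tendsto (fun t => (Φ ^ t) p q) Filter.atTop (nhds 0) := by
          intro p q
          rw [NormedAddCommGroup.tendsto_nhds_zero]
          intro ε hε
          filter_upwards [hdecay ε hε] with t ht
          have h1 := ht p q
          rw [map_matrix_pow] at h1
          simpa [Matrix.map_apply] using h1
        have he0 : ∀ t : ℕ, e t = (Φ ^ t).mulVec (e 0) := by
          intro t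
          induction t with
          | zero => simp [Matrix.one_mulVec]
          | succ t ih => rw [he t, ih, Matrix.mulVec_mulVec, ← pow_succ']
        rw [tendsto_pi_nhds]
        intro p
        have h1 : Filter.Tendsto (fun t => ∑ q, (Φ ^ t) p q * e 0 q)
            Filter.atTop (nhds 0) := by
          have h2 : Filter.Tendsto (fun t => ∑ q, (Φ ^ t) p q * e 0 q)
              Filter.atTop (nhds (∑ q : {i : Fin N // i ∈ V} × Fin d, 0 * e 0 q)) :=
            tendsto_finset_sum _ (fun q _ => (hentry p q).mul_const (e 0 q))
          simpa using h2
        have h3 : (fun t => e t p) = fun t => ∑ q, (Φ ^ t) p q * e 0 q := by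
          funext t
          rw [he0 t]
          rfl
        rw [Pi.zero_apply]
        rw [h3]
        exact h1
      · rw [tendsto_pi_nhds]
        intro p
        exact absurd ⟨p.1⟩ hne
end
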